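/- Let A_n be the (n+1)×(n+1) matrix of Proposition 2 (superdiagonal n, n-1, ..., 1; subdiagonal Q, 2Q, ..., nQ). Then the characteristic polynomial of A_n is ∏_{j=0}^{n} (λ - (n-2j)√Q); in particular det(A_n) = 0 if n is even and det(A_n) = (-1)^{(n+1)/2} (n!!)² Q^{(n+1)/2} up to sign when n is odd, and tr(A_n²) = Q·Σ_{j=0}^n (n-2j)² = Q·n(n+1)(n+2)/3. -/

import Mathlib

/-!
Writing `Q = q²`, the transpose of `A_n` is the matrix, in the basis `1, X, …, X^n`, of the
operator `p ↦ (Q - X²) p' + n X p`, and the polynomials `(q + X)^(n-j) (q - X)^j` are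
eigenvectors of this operator with eigenvalue `(n - 2j) q`. For `q ≠ 0` these `n + 1`
eigenvalues are distinct, so they are all the roots of the monic characteristic polynomial of
degree `n + 1`; for `q = 0` the matrix is strictly upper triangular. The determinant is then the
product of the eigenvalues, while `tr(A_n²)` is summed directly along the two off-diagonals.
-/

open Polynomial Finset
open scoped Matrix

theorem Matrix.isRoot_charpoly_of_vecMul_eq_smul {R n : Type*} [CommRing R] [IsDomain R]
    [Fintype n] [DecidableEq n] {M : Matrix n n R} {v : n → R} {μ : R}
    (hv : v ≠ 0) (h : v ᵥ* M = μ • v) : M.charpoly.IsRoot μ := by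
  rw [IsRoot, Matrix.eval_charpoly, ← Matrix.exists_vecMul_eq_zero_iff]
  refine ⟨v, hv, ?_⟩
  ext i
  simp [Matrix.vecMul_sub, h, Matrix.scalar_apply]

theorem Polynomial.Monic.eq_prod_X_sub_C_of_injective {R ι : Type*} [CommRing R] [IsDomain R]
    [Fintype ι] {p : R[X]} (hp : p.Monic) (hdeg : p.natDegree = Fintype.card ι) {f : ι → R}
    (hf : Function.Injective f) (hroot : ∀ i, p.IsRoot (f i)) :
    p = ∏ i, (X - C (f i)) := by
  have hprod : (∏ i, (X - C (f i))).Monic := monic_prod_of_monic _ _ fun i _ => monic_X_sub_C _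
  have hdeg' : (∏ i, (X - C (f i))).natDegree = Fintype.card ι := by
    rw [natDegree_prod_of_monic _ _ fun i _ => monic_X_sub_C _]
    simp
  refine eq_of_degree_sub_lt_of_eval_index_eq univ hf.injOn ?_ fun i _ => ?_
  · rw [card_univ, ← hdeg, ← degree_eq_natDegree hp.ne_zero]
    refine degree_sub_lt_left ?_ hp.ne_zero (by rw [hp.leadingCoeff, hprod.leadingCoeff])
    rw [degree_eq_natDegree hp.ne_zero, degree_eq_natDegree hprod.ne_zero, hdeg, hdeg']
  · rw [(hroot i).eq_zero, eval_prod, prod_eq_zero (mem_univ i) (by simp)]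

theorem Matrix.det_eq_prod_of_charpoly_eq {R n : Type*} [CommRing R] [Fintype n] [DecidableEq n]
    {M : Matrix n n R} {f : n → R} (h : M.charpoly = ∏ i, (X - C (f i))) :
    M.det = ∏ i, f i := by
  rw [Matrix.det_eq_sign_charpoly_coeff, h, coeff_zero_eq_eval_zero, eval_prod]
  simp only [eval_sub, eval_X, eval_C, zero_sub]
  rw [prod_neg, card_univ, ← mul_assoc, ← pow_add, Even.neg_one_pow ⟨_, rfl⟩, one_mul]

section KacMatrix

variable {R : Type*} [CommRing R]

def kacMatrix (n : ℕ) (Q : R) : Matrix (Fin (n + 1)) (Fin (n + 1)) R :=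
  Matrix.of fun i j =>
    (if (j : ℕ) = (i : ℕ) + 1 then (n : R) - (i : ℕ) else 0) +
      (if (i : ℕ) = (j : ℕ) + 1 then ((i : ℕ) : R) * Q else 0)

noncomputable def kacOperator (n : ℕ) (Q : R) (p : R[X]) : R[X] :=
  C Q * derivative p + X * (C (n : R) * p - X * derivative p)

theorem coeff_kacOperator_zero (n : ℕ) (Q : R) (p : R[X]) :
    (kacOperator n Q p).coeff 0 = Q * p.coeff 1 := by
  simp [kacOperator, coeff_derivative]

theorem coeff_kacOperator_succ (n : ℕ) (Q : R) (p : R[X]) (k : ℕ) :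
    (kacOperator n Q p).coeff (k + 1) =
      ((n : R) - k) * p.coeff k + (k + 2) * Q * p.coeff (k + 2) := by
  rcases k with _ | k
  · simp [kacOperator, coeff_derivative]
    ring
  · simp [kacOperator, coeff_derivative, coeff_X_mul]
    ring

theorem vecMul_kacMatrix (n : ℕ) (Q : R) {p : R[X]} (hp : p.natDegree ≤ n) :
    (fun i : Fin (n + 1) => p.coeff i) ᵥ* kacMatrix n Q =
      fun i : Fin (n + 1) => (kacOperator n Q p).coeff i := by
  have htop : p.coeff (n + 1) = 0 := coeff_eq_zero_of_natDegree_lt (by omega)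
  ext ⟨j, hj⟩
  simp only [Matrix.vecMul, dotProduct, kacMatrix, Matrix.of_apply]
  rw [Fin.sum_univ_eq_sum_range (fun l => p.coeff l * ((if j = l + 1 then (n : R) - l else 0) +
      (if l = j + 1 then (l : R) * Q else 0)))]
  rcases j with _ | k
  · rcases n with _ | n
    · simp [coeff_kacOperator_zero, htop]
    · simp [mul_ite, sum_ite_eq', coeff_kacOperator_zero]
      ring
  · simp [mul_ite, sum_ite_eq', mul_add, sum_add_distrib, coeff_kacOperator_succ,
      show k ≤ n by omega]
    split_ifs with hk
    · ring
    · obtain rfl : n = k + 1 := by omega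
      simp [htop]

theorem kacOperator_C_add_X_pow_mul_C_sub_X_pow (a b : ℕ) (q : R) :
    kacOperator (a + b) (q ^ 2) ((C q + X) ^ a * (C q - X) ^ b) =
      C (((a : R) - b) * q) * ((C q + X) ^ a * (C q - X) ^ b) := by
  rcases a with _ | a <;> rcases b with _ | b <;>
    simp [kacOperator, derivative_mul, derivative_pow] <;> ring

theorem isUpperTriangular_kacMatrix_zero (n : ℕ) : (kacMatrix n (0 : R)).IsUpperTriangular := by
  rintro i j (hij : (j : ℕ) < i)
  simp [kacMatrix, show (j : ℕ) ≠ i + 1 by omega]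

theorem charpoly_kacMatrix_of_ne_zero [IsDomain R] [CharZero R] (n : ℕ) {q : R} (hq : q ≠ 0) :
    (kacMatrix n (q ^ 2)).charpoly =
      ∏ j : Fin (n + 1), (X - C (((n : R) - 2 * (j : ℕ)) * q)) := by
  refine (Matrix.charpoly_monic _).eq_prod_X_sub_C_of_injective
    (by rw [Matrix.charpoly_natDegree_eq_dim]) (fun a b hab => ?_) fun j => ?_
  · have : ((2 * (a : ℕ) : ℕ) : R) = (2 * (b : ℕ) : ℕ) := by
      push_cast
      linear_combination -(mul_right_cancel₀ hq hab)
    exact Fin.ext (by have := Nat.cast_injective this; omega)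
  · set p : R[X] := (C q + X) ^ (n - j) * (C q - X) ^ (j : ℕ)
    have hdeg : p.natDegree ≤ n := by
      simp only [p]
      compute_degree
      omega
    have hp0 : p.coeff 0 = q ^ n := by
      simp [p, coeff_zero_eq_eval_zero, ← pow_add, Nat.sub_add_cancel (show (j : ℕ) ≤ n by omega)]
    apply Matrix.isRoot_charpoly_of_vecMul_eq_smul (v := fun i : Fin (n + 1) => p.coeff i)
    · intro h
      simpa [hp0, hq] using congrFun h 0
    · have heigen := kacOperator_C_add_X_pow_mul_C_sub_X_pow (n - j) (j : ℕ) q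
      rw [Nat.sub_add_cancel (by omega)] at heigen
      rw [vecMul_kacMatrix _ _ hdeg]
      ext i
      rw [Pi.smul_apply, smul_eq_mul, heigen, coeff_C_mul, Nat.cast_sub (by omega)]
      ring

theorem charpoly_kacMatrix [IsDomain R] [CharZero R] (n : ℕ) (q : R) :
    (kacMatrix n (q ^ 2)).charpoly =
      ∏ j : Fin (n + 1), (X - C (((n : R) - 2 * (j : ℕ)) * q)) := by
  rcases eq_or_ne q 0 with rfl | hq
  · rw [zero_pow two_ne_zero,
      Matrix.charpoly_of_isUpperTriangular _ (isUpperTriangular_kacMatrix_zero n)]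
    simp [kacMatrix]
  · exact charpoly_kacMatrix_of_ne_zero n hq

theorem det_kacMatrix [IsDomain R] [CharZero R] (n : ℕ) (q : R) :
    (kacMatrix n (q ^ 2)).det = (∏ j ∈ range (n + 1), ((n : R) - 2 * j)) * q ^ (n + 1) := by
  rw [Matrix.det_eq_prod_of_charpoly_eq (charpoly_kacMatrix n q), prod_mul_distrib,
    Fin.prod_univ_eq_prod_range (fun j => (n : R) - 2 * j)]
  simp

theorem prod_range_sub_two_mul_of_even {n : ℕ} (hn : Even n) :
    ∏ j ∈ range (n + 1), ((n : R) - 2 * j) = 0 := by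
  obtain ⟨m, rfl⟩ := hn
  exact prod_eq_zero (i := m) (mem_range.2 (by omega)) (by push_cast; ring)

theorem prod_range_sub_two_mul_of_odd {n : ℕ} (hn : Odd n) :
    ∏ j ∈ range (n + 1), ((n : R) - 2 * j) = (-1) ^ ((n + 1) / 2) * (n.doubleFactorial : R) ^ 2 := by
  obtain ⟨m, rfl⟩ := hn
  rw [show (2 * m + 1 + 1) / 2 = m + 1 by omega]
  induction m with
  | zero =>
    simp [prod_range_succ]
    norm_num
  | succ m ih =>
    have hshift : ∀ k ∈ range (2 * m + 2),
        ((2 * m + 1 + 2 : ℕ) : R) - 2 * ((k + 1 : ℕ) : R) = ((2 * m + 1 : ℕ) : R) - 2 * k := by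
      intro k _
      push_cast
      ring
    rw [show 2 * (m + 1) + 1 = 2 * m + 1 + 2 by ring, prod_range_succ, prod_range_succ',
      prod_congr rfl hshift, ih, Nat.doubleFactorial_add_two]
    push_cast
    ring

theorem kacMatrix_mul_self_apply_self (n : ℕ) (Q : R) (i : Fin (n + 1)) :
    (kacMatrix n Q * kacMatrix n Q) i i = (((n : R) - i) * (i + 1) + i * (n - i + 1)) * Q := by
  obtain ⟨i, hi⟩ := i
  have hterm : ∀ l : ℕ, ((if l = i + 1 then (n : R) - i else 0) +
      (if i = l + 1 then (i : R) * Q else 0)) * ((if i = l + 1 then (n : R) - l else 0) +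
      (if l = i + 1 then (l : R) * Q else 0)) =
      (if l = i + 1 then ((n : R) - i) * (i + 1) * Q else 0) +
        (if i = l + 1 then (i : R) * Q * (n - l) else 0) := by
    intro l
    split_ifs <;> subst_vars <;> first | omega | (push_cast; ring)
  simp only [Matrix.mul_apply, kacMatrix, Matrix.of_apply]
  rw [Fin.sum_univ_eq_sum_range (fun l => ((if l = i + 1 then (n : R) - i else 0) +
      (if i = l + 1 then (i : R) * Q else 0)) * ((if i = l + 1 then (n : R) - l else 0) +
      (if l = i + 1 then (l : R) * Q else 0))), sum_congr rfl fun l _ => hterm l,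
    sum_add_distrib, sum_ite_eq']
  have hlast : (if i + 1 ∈ range (n + 1) then ((n : R) - i) * (i + 1) * Q else 0) =
      ((n : R) - i) * (i + 1) * Q := by
    split_ifs with h
    · rfl
    · obtain rfl : i = n := by simp at h; omega
      ring
  rw [hlast]
  rcases i with _ | k
  · simp
  · simp [show k ≤ n by omega]
    ring

end KacMatrix

section Sums

variable {K : Type*} [Field K] [CharZero K]

theorem sum_range_quadratic (a b c : K) (m : ℕ) :
    ∑ i ∈ range m, (a + b * i + c * i ^ 2) =
      m * a + b * (m * (m - 1) / 2) + c * (m * (m - 1) * (2 * m - 1) / 6) := by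
  induction m with
  | zero => simp
  | succ m ih =>
    rw [sum_range_succ, ih]
    push_cast
    ring

theorem sum_range_sub_two_mul_sq (n : ℕ) :
    ∑ j ∈ range (n + 1), ((n : K) - 2 * j) ^ 2 = (n : K) * (n + 1) * (n + 2) / 3 := by
  rw [sum_congr rfl fun (j : ℕ) _ =>
      show ((n : K) - 2 * j) ^ 2 = n ^ 2 + -4 * n * j + 4 * j ^ 2 by ring,
    sum_range_quadratic]
  push_cast
  ring

theorem trace_kacMatrix_mul_self (n : ℕ) (Q : K) :
    (kacMatrix n Q * kacMatrix n Q).trace = Q * n * (n + 1) * (n + 2) / 3 := by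
  simp only [Matrix.trace, Matrix.diag, kacMatrix_mul_self_apply_self]
  rw [Fin.sum_univ_eq_sum_range (fun i => (((n : K) - i) * (i + 1) + i * (n - i + 1)) * Q),
    ← sum_mul, sum_congr rfl fun (i : ℕ) _ =>
      show ((n : K) - i) * (i + 1) + i * (n - i + 1) = n + 2 * n * i + -2 * i ^ 2 by ring,
    sum_range_quadratic]
  push_cast
  ring

end Sums

/-- For the tridiagonal matrix `A_n` of Proposition 2 (superdiagonal
`n, …, 1`, subdiagonal `Q, 2Q, …, nQ`, `Q ≥ 0`), the characteristic polynomial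
is `∏_{j=0}^{n} (λ - (n-2j)√Q)`; in particular `det A_n = 0` for `n` even,
`det A_n = (-1)^{(n+1)/2} (n‼)² Q^{(n+1)/2}` for `n` odd, and
`tr(A_n²) = Q·Σ_j (n-2j)² = Q·n(n+1)(n+2)/3`. -/
theorem stmt17 (n : ℕ) (Q : ℝ) (hQ : 0 ≤ Q)
    (A : Matrix (Fin (n + 1)) (Fin (n + 1)) ℝ)
    (hA : ∀ i j : Fin (n + 1),
      A i j =
        if (j : ℕ) = (i : ℕ) + 1 then (n : ℝ) - (i : ℕ)
        else if (i : ℕ) = (j : ℕ) + 1 then ((i : ℕ) : ℝ) * Q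
        else 0) :
    A.charpoly =
      ∏ j : Fin (n + 1), (X - C (((n : ℝ) - 2 * (j : ℕ)) * Real.sqrt Q)) ∧
    (Even n → A.det = 0) ∧
    (Odd n → A.det =
      (-1 : ℝ) ^ ((n + 1) / 2) * ((Nat.doubleFactorial n : ℝ)) ^ 2 *
        Q ^ ((n + 1) / 2)) ∧
    Matrix.trace (A * A) =
      Q * ∑ j : Fin (n + 1), ((n : ℝ) - 2 * (j : ℕ)) ^ 2 ∧
    Matrix.trace (A * A) = Q * n * (n + 1) * (n + 2) / 3 := by
  have hK : A = kacMatrix n (Real.sqrt Q ^ 2) := by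
    ext i j
    rw [hA, Real.sq_sqrt hQ]
    simp only [kacMatrix, Matrix.of_apply]
    split_ifs <;> first | omega | ring
  have htrace : (A * A).trace = Q * n * (n + 1) * (n + 2) / 3 := by
    rw [hK, trace_kacMatrix_mul_self, Real.sq_sqrt hQ]
  refine ⟨hK ▸ charpoly_kacMatrix n _, fun hn => ?_, fun hn => ?_, ?_, htrace⟩
  · rw [hK, det_kacMatrix, prod_range_sub_two_mul_of_even hn, zero_mul]
  · have hsqrt : Real.sqrt Q ^ (n + 1) = Q ^ ((n + 1) / 2) := by
      conv_rhs => rw [← Real.sq_sqrt hQ, ← pow_mul, Nat.two_mul_div_two_of_even hn.add_one]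
    rw [hK, det_kacMatrix, prod_range_sub_two_mul_of_odd hn, hsqrt]
  · rw [htrace, Fin.sum_univ_eq_sum_range (fun j => ((n : ℝ) - 2 * j) ^ 2),
      sum_range_sub_two_mul_sq]
    ring
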